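/- Let k = 4m+3 for a non-negative integer m, let x_i, y_i, z_i ∈ {0,1} for 0 ≤ i ≤ n, and define S_t = Σ_{i=n-t}^n (x_i + z_i - k y_i) 2^i. Suppose 0 ≤ S_t ≤ 2m·2^{n-t} and t < n. If (x_{n-t-1}, y_{n-t-1}, z_{n-t-1}) = (1,0,1) or (0,0,0), then 0 ≤ S_{t+1} < k·2^{n-t-1}. -/

import Mathlib

/-- `S_t = Σ_{i=n-t}^n (x_i + z_i - k y_i) 2^i` as an integer. -/
def Spoly (k n : ℕ) (x y z : ℕ → ℕ) (t : ℕ) : ℤ :=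
  ∑ i ∈ Finset.Icc (n - t) n, ((x i : ℤ) + (z i : ℤ) - (k : ℤ) * (y i : ℤ)) * 2 ^ i

lemma Spoly_succ (k n : ℕ) (x y z : ℕ → ℕ) {t : ℕ} (ht : t < n) :
    Spoly k n x y z (t + 1) =
      ((x (n - t - 1) : ℤ) + z (n - t - 1) - k * y (n - t - 1)) * 2 ^ (n - t - 1)
        + Spoly k n x y z t := by
  rw [Spoly, Spoly, ← Nat.sub_sub,
    ← Finset.insert_Icc_add_one_left_eq_Icc (by omega : n - t - 1 ≤ n),
    Nat.sub_add_cancel (by omega : 1 ≤ n - t), Finset.sum_insert (by rw [Finset.mem_Icc]; omega)]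

lemma add_mul_two_pow_mem_Ico {m d S : ℤ} {j : ℕ} (hd0 : 0 ≤ d) (hd2 : d ≤ 2)
    (hS0 : 0 ≤ S) (hS1 : S ≤ 2 * m * 2 ^ (j + 1)) :
    0 ≤ d * 2 ^ j + S ∧ d * 2 ^ j + S < (4 * m + 3) * 2 ^ j := by
  have hpow : (0 : ℤ) < 2 ^ j := by positivity
  rw [pow_succ] at hS1
  constructor <;> nlinarith

theorem stmt_8_general (m n t : ℕ) (ht : t < n)
    (x y z : ℕ → ℕ)
    (hS0 : 0 ≤ Spoly (4 * m + 3) n x y z t)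
    (hS1 : Spoly (4 * m + 3) n x y z t ≤ (2 * m : ℤ) * 2 ^ (n - t))
    (hcase : (x (n - t - 1), y (n - t - 1), z (n - t - 1)) = (1, 0, 1) ∨
             (x (n - t - 1), y (n - t - 1), z (n - t - 1)) = (0, 0, 0)) :
    0 ≤ Spoly (4 * m + 3) n x y z (t + 1) ∧
      Spoly (4 * m + 3) n x y z (t + 1) < (4 * m + 3 : ℤ) * 2 ^ (n - t - 1) := by
  rw [show n - t = n - t - 1 + 1 by omega] at hS1
  rw [Spoly_succ _ _ _ _ _ ht]
  rcases hcase with h | h <;> simp only [Prod.mk.injEq] at h <;>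
    rw [h.1, h.2.1, h.2.2] <;> push_cast
  · simpa using add_mul_two_pow_mem_Ico (d := 2) (by norm_num) le_rfl hS0 hS1
  · simpa using add_mul_two_pow_mem_Ico (d := 0) le_rfl (by norm_num) hS0 hS1

theorem stmt_8 (m n t : ℕ) (ht : t < n)
    (x y z : ℕ → ℕ)
    (hx : ∀ i ≤ n, x i ≤ 1) (hy : ∀ i ≤ n, y i ≤ 1) (hz : ∀ i ≤ n, z i ≤ 1)
    (hS0 : 0 ≤ Spoly (4 * m + 3) n x y z t)
    (hS1 : Spoly (4 * m + 3) n x y z t ≤ (2 * m : ℤ) * 2 ^ (n - t))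
    (hcase : (x (n - t - 1), y (n - t - 1), z (n - t - 1)) = (1, 0, 1) ∨
             (x (n - t - 1), y (n - t - 1), z (n - t - 1)) = (0, 0, 0)) :
    0 ≤ Spoly (4 * m + 3) n x y z (t + 1) ∧
      Spoly (4 * m + 3) n x y z (t + 1) < (4 * m + 3 : ℤ) * 2 ^ (n - t - 1) :=
  stmt_8_general m n t ht x y z hS0 hS1 hcase
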